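/- There exist constants δ₁ > 0 and C₂ > 0, depending only on m, α and β, such that for any solution (ũ^k_n, ṽ^k_n) of the inhomogeneous QLB scheme with h ∈ (0,1/2): if (|ũ^k_n|² + |ṽ^k_n|²)h ≤ δ₁ for a given k ≥ 0 and n ∈ ℤ, then | |ũ^{k+1}_{n+1}|² − |ũ^k_n|² |/h ≤ C₂((|ũ^k_n|² + |ṽ^k_n|²) + |ũ^k_n|²|ṽ^k_n|² + |g^k_n|²) and | |ṽ^{k+1}_{n−1}|² − |ṽ^k_n|² |/h ≤ C₂((|ũ^k_n|² + |ṽ^k_n|²) + |ũ^k_n|²|ṽ^k_n|² + |g^k_n|²). -/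

import Mathlib

open Complex

noncomputable section

/-- `G(u,v) = conj(u)·v + u·conj(v)`. -/
def Gc (u v : ℂ) : ℂ := (starRingEnd ℂ) u * v + u * (starRingEnd ℂ) v

/-- One step of the quantum lattice Boltzmann (QLB) scheme:
`a, b` are the values `u^k_n, v^k_n` and `a', b'` the values `u^{k+1}_{n+1}, v^{k+1}_{n-1}`. -/
def QLBStep (h m α β : ℝ) (a b a' b' : ℂ) : Prop :=
  a' - a = (Complex.I * (m : ℂ) * (h : ℂ) / 2) * (b' + b)
      + (Complex.I * (α : ℂ) * (h : ℂ) / 2) * (a' + a) * ((‖b‖ ^ 2 : ℝ) : ℂ)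
      + (Complex.I * (β : ℂ) * (h : ℂ) / 2) * (b' + b) * Gc a b
  ∧ b' - b = (Complex.I * (m : ℂ) * (h : ℂ) / 2) * (a' + a)
      + (Complex.I * (α : ℂ) * (h : ℂ) / 2) * (b' + b) * ((‖a‖ ^ 2 : ℝ) : ℂ)
      + (Complex.I * (β : ℂ) * (h : ℂ) / 2) * (a' + a) * Gc a b

/-- `(u, v)` is a solution of the QLB scheme. -/
def IsQLB (h m α β : ℝ) (u v : ℕ → ℤ → ℂ) : Prop :=
  ∀ (k : ℕ) (n : ℤ), QLBStep h m α β (u k n) (v k n) (u (k + 1) (n + 1)) (v (k + 1) (n - 1))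

/-- One step of the inhomogeneous QLB scheme with sources `g1, g2`. -/
def QLBStepInhom (h m α β : ℝ) (g1 g2 : ℂ) (a b a' b' : ℂ) : Prop :=
  (a' - a) / (h : ℂ) = (Complex.I * (m : ℂ) / 2) * (b' + b)
      + (Complex.I * (α : ℂ) / 2) * (a' + a) * ((‖b‖ ^ 2 : ℝ) : ℂ)
      + (Complex.I * (β : ℂ) / 2) * (b' + b) * Gc a b + g1
  ∧ (b' - b) / (h : ℂ) = (Complex.I * (m : ℂ) / 2) * (a' + a)
      + (Complex.I * (α : ℂ) / 2) * (b' + b) * ((‖a‖ ^ 2 : ℝ) : ℂ)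
      + (Complex.I * (β : ℂ) / 2) * (a' + a) * Gc a b + g2

/-- `(u, v)` is a solution of the inhomogeneous QLB scheme with sources `g1, g2`. -/
def IsQLBInhom (h m α β : ℝ) (g1 g2 : ℕ → ℤ → ℂ) (u v : ℕ → ℤ → ℂ) : Prop :=
  ∀ (k : ℕ) (n : ℤ), QLBStepInhom h m α β (g1 k n) (g2 k n)
    (u k n) (v k n) (u (k + 1) (n + 1)) (v (k + 1) (n - 1))

/-!
For one step write `A = a' + a`, `B = b' + b` and `c = m/2 + β G(a,b)/2` (a real number since
`G(a,b) = 2 Re(conj a · b)`). Pairing the first equation with `conj A` kills the `α` term: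
`(‖a'‖² - ‖a‖²)/h = -c Im(conj A · B) + Re(conj A · g₁)`, and the analogous identity for `b`
carries `+c Im(conj A · B)`, so the mass `‖a‖² + ‖b‖²` changes only through the sources. For
`h < 1/2` this gives `‖A‖, ‖B‖ ≤ 3σ` with `σ = ‖a‖ + ‖b‖ + ‖g₁‖ + ‖g₂‖`, which handles the
`m`-part of `c`. The `β`-part is cubic, `|β| ‖a‖ ‖b‖`, and must be paired with
`‖A‖ ≤ 2‖a‖ + X`, `‖B‖ ≤ 2‖b‖ + X`, where `X = ‖a' - a‖ + ‖b' - b‖`. Under the smallness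
`h (‖a‖² + ‖b‖²) ≤ δ₁` the terms of the increment bound that are linear in `X` are absorbed,
giving `X = O(h (σ + ‖a‖ ‖b‖ (‖a‖ + ‖b‖)))`; then `h (‖a‖ + ‖b‖)² ≤ 1` turns every remaining
term into a multiple of `‖a‖² + ‖b‖²`, `‖a‖² ‖b‖²` or `‖g₁‖² + ‖g₂‖²`. The bound for `v` is
the bound for `u` applied to the step with `(a, b, g₁, g₂)` replaced by `(b, a, g₂, g₁)`,
which is again a step of the scheme.
-/

open ComplexConjugate

lemma norm_add_le_two_mul_norm_add_norm_sub {E : Type*} [SeminormedAddCommGroup E] (a a' : E) :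
    ‖a' + a‖ ≤ 2 * ‖a‖ + ‖a' - a‖ :=
  calc ‖a' + a‖ = ‖(a' - a) + (a + a)‖ := by rw [sub_add_add_cancel]
    _ ≤ ‖a' - a‖ + (‖a‖ + ‖a‖) := (norm_add_le _ _).trans (add_le_add le_rfl (norm_add_le a a))
    _ = 2 * ‖a‖ + ‖a' - a‖ := by ring

namespace QLB

section Estimates

variable {K h P Q G₁ G₂ : ℝ}

lemma le_two_mul_of_sq_add_sq_le {P' Q' : ℝ} (hh : h ≤ 1 / 2) (hP : 0 ≤ P) (hQ : 0 ≤ Q)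
    (hG₁ : 0 ≤ G₁) (hG₂ : 0 ≤ G₂) (hP' : 0 ≤ P') (hQ' : 0 ≤ Q')
    (hmass : P' ^ 2 + Q' ^ 2 ≤ P ^ 2 + Q ^ 2 + h * ((P' + P) * G₁ + (Q' + Q) * G₂)) :
    P' ≤ 2 * (P + Q + G₁ + G₂) := by
  have hsrc : h * ((P' + P) * G₁ + (Q' + Q) * G₂) ≤ ((P' + P) * G₁ + (Q' + Q) * G₂) / 2 := by
    nlinarith [mul_nonneg (add_nonneg hP' hP) hG₁, mul_nonneg (add_nonneg hQ' hQ) hG₂]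
  nlinarith [sq_nonneg (Q' - G₂), sq_nonneg (P' - G₁), mul_nonneg hP hQ, mul_nonneg hP hG₂,
    mul_nonneg hQ hG₁, mul_nonneg hG₁ hG₂, mul_nonneg hP hG₁, mul_nonneg hQ hG₂]

lemma small_step_bounds (hK : 1 ≤ K) (hh : 0 ≤ h) (hh2 : h ≤ 1 / 2) (hP : 0 ≤ P) (hQ : 0 ≤ Q)
    (hsmall : 2 * K * (h * (P ^ 2 + Q ^ 2)) ≤ 1) :
    h * (P + Q) ^ 2 ≤ 1 ∧ h * (P + Q) ≤ 1 ∧ h * (P * Q) ≤ 1 / 4 := by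
  have hw : 2 * (h * (P ^ 2 + Q ^ 2)) ≤ 1 := by
    nlinarith [mul_nonneg hh (add_nonneg (sq_nonneg P) (sq_nonneg Q))]
  have hsum : h * (P + Q) ^ 2 ≤ 1 := by nlinarith [mul_nonneg hh (sq_nonneg (P - Q))]
  refine ⟨hsum, ?_, by nlinarith [mul_nonneg hh (sq_nonneg (P - Q))]⟩
  have : (h * (P + Q)) ^ 2 ≤ 1 := by nlinarith [mul_le_mul_of_nonneg_left hsum hh]
  nlinarith [mul_nonneg hh (add_nonneg hP hQ)]

lemma increment_le_of_small {γ A B X : ℝ} (hK : 1 ≤ K) (hh : 0 ≤ h) (hP : 0 ≤ P) (hQ : 0 ≤ Q)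
    (hG₁ : 0 ≤ G₁) (hG₂ : 0 ≤ G₂) (hA₀ : 0 ≤ A) (hB₀ : 0 ≤ B) (hX : 0 ≤ X)
    (hsmall : 2 * K * (h * (P ^ 2 + Q ^ 2)) ≤ 1) (hγ : γ ≤ K / 2 + K * (P * Q))
    (hA : A ≤ 3 * (P + Q + G₁ + G₂)) (hB : B ≤ 3 * (P + Q + G₁ + G₂))
    (hA' : A ≤ 2 * P + X) (hB' : B ≤ 2 * Q + X)
    (hinc : X ≤ h * (γ * (A + B) + K / 2 * (Q ^ 2 * A + P ^ 2 * B) + G₁ + G₂)) :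
    X ≤ 16 * K * h * (P + Q + G₁ + G₂ + P * Q * (P + Q)) := by
  have hK₀ : 0 ≤ K := by linarith
  have hPQ : 0 ≤ P * Q := mul_nonneg hP hQ
  have hcoupling : γ * (A + B) ≤ 3 * K * (P + Q + G₁ + G₂) + 2 * K * (P * Q) * (P + Q + X) := by
    have := mul_le_mul_of_nonneg_right hγ (add_nonneg hA₀ hB₀)
    nlinarith [mul_le_mul_of_nonneg_left (add_le_add hA' hB') (mul_nonneg hK₀ hPQ)]
  have hcubic : K / 2 * (Q ^ 2 * A + P ^ 2 * B)
      ≤ K * (P * Q) * (P + Q) + K / 2 * (P ^ 2 + Q ^ 2) * X := by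
    nlinarith [mul_le_mul_of_nonneg_left hA' (mul_nonneg hK₀ (sq_nonneg Q)),
      mul_le_mul_of_nonneg_left hB' (mul_nonneg hK₀ (sq_nonneg P))]
  -- the part of the right-hand side that is linear in `X` is absorbed by the left-hand side
  have habsorb : h * (2 * K * (P * Q) + K / 2 * (P ^ 2 + Q ^ 2)) * X ≤ 3 / 4 * X := by
    have : h * (2 * K * (P * Q) + K / 2 * (P ^ 2 + Q ^ 2)) ≤ 3 / 4 := by
      nlinarith [mul_nonneg (mul_nonneg hh hK₀) (sq_nonneg (P - Q))]
    exact mul_le_mul_of_nonneg_right this hX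
  have hX' : X ≤ h * (3 * K * (P + Q + G₁ + G₂) + 3 * K * (P * Q) * (P + Q) + G₁ + G₂)
      + h * (2 * K * (P * Q) + K / 2 * (P ^ 2 + Q ^ 2)) * X := by
    nlinarith [mul_le_mul_of_nonneg_left (add_le_add hcoupling hcubic) hh]
  have hG : h * (G₁ + G₂) ≤ K * h * (P + Q + G₁ + G₂) := by
    nlinarith [mul_nonneg hh (add_nonneg hP hQ), mul_nonneg hh (add_nonneg hG₁ hG₂)]
  nlinarith [mul_nonneg (mul_nonneg hK₀ hh) (mul_nonneg hPQ (add_nonneg hP hQ))]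

lemma cross_term_le_of_small (hP : 0 ≤ P) (hQ : 0 ≤ Q) (hG₁ : 0 ≤ G₁) (hG₂ : 0 ≤ G₂)
    (hsum : h * (P + Q) ^ 2 ≤ 1) (hsum' : h * (P + Q) ≤ 1) :
    P * Q * (P + Q) * (h * (P + Q + G₁ + G₂ + P * Q * (P + Q)))
      ≤ 2 * (P ^ 2 + Q ^ 2 + P ^ 2 * Q ^ 2 + (G₁ ^ 2 + G₂ ^ 2)) := by
  have hPQ : 0 ≤ P * Q := mul_nonneg hP hQ
  have := mul_le_mul_of_nonneg_left hsum hPQ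
  have := mul_le_mul_of_nonneg_left hsum' (mul_nonneg hPQ (add_nonneg hG₁ hG₂))
  have := mul_le_mul_of_nonneg_left hsum (sq_nonneg (P * Q))
  nlinarith [sq_nonneg (P - Q), sq_nonneg (P * Q - G₁), sq_nonneg (P * Q - G₂)]

lemma sq_term_le_of_small (hh : 0 ≤ h) (hh2 : h ≤ 1 / 2) (hP : 0 ≤ P) (hQ : 0 ≤ Q)
    (hsum : h * (P + Q) ^ 2 ≤ 1) (hprod : h * (P * Q) ≤ 1 / 4) :
    P * Q * (h * (P + Q + G₁ + G₂ + P * Q * (P + Q))) ^ 2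
      ≤ P ^ 2 + Q ^ 2 + P ^ 2 * Q ^ 2 + (G₁ ^ 2 + G₂ ^ 2) := by
  have hPQ : 0 ≤ P * Q := mul_nonneg hP hQ
  have hsplit : (P + Q + G₁ + G₂ + P * Q * (P + Q)) ^ 2
      ≤ 3 * ((P + Q) ^ 2 + (G₁ + G₂) ^ 2 + (P * Q) ^ 2 * (P + Q) ^ 2) := by
    nlinarith [sq_nonneg (P + Q - (G₁ + G₂)), sq_nonneg (P + Q - P * Q * (P + Q)),
      sq_nonneg (G₁ + G₂ - P * Q * (P + Q))]
  have := mul_le_mul_of_nonneg_left hsplit (mul_nonneg hPQ (sq_nonneg h))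
  have := mul_le_mul_of_nonneg_left hsum (mul_nonneg hPQ hh)
  have := mul_le_mul hprod (mul_le_mul_of_nonneg_right hh2 (sq_nonneg (G₁ + G₂)))
    (mul_nonneg hh (sq_nonneg _)) (by norm_num)
  have := mul_le_mul_of_nonneg_left (mul_le_mul hprod hsum (by positivity) (by norm_num))
    (sq_nonneg (P * Q))
  nlinarith [sq_nonneg (P - Q), sq_nonneg (G₁ - G₂)]

lemma mul_two_add_mul_two_add_le {X : ℝ} (hK : 1 ≤ K) (hh : 0 ≤ h) (hh2 : h ≤ 1 / 2)
    (hP : 0 ≤ P) (hQ : 0 ≤ Q) (hG₁ : 0 ≤ G₁) (hG₂ : 0 ≤ G₂) (hX : 0 ≤ X)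
    (hsmall : 2 * K * (h * (P ^ 2 + Q ^ 2)) ≤ 1)
    (hXle : X ≤ 16 * K * h * (P + Q + G₁ + G₂ + P * Q * (P + Q))) :
    P * Q * ((2 * P + X) * (2 * Q + X))
      ≤ 324 * K ^ 2 * (P ^ 2 + Q ^ 2 + P ^ 2 * Q ^ 2 + (G₁ ^ 2 + G₂ ^ 2)) := by
  obtain ⟨hsum, hsum', hprod⟩ := small_step_bounds hK hh hh2 hP hQ hsmall
  have hcross := cross_term_le_of_small hP hQ hG₁ hG₂ hsum hsum'
  have hsq := sq_term_le_of_small (G₁ := G₁) (G₂ := G₂) hh hh2 hP hQ hsum hprod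
  set E := P ^ 2 + Q ^ 2 + P ^ 2 * Q ^ 2 + (G₁ ^ 2 + G₂ ^ 2)
  set Y := h * (P + Q + G₁ + G₂ + P * Q * (P + Q))
  have hK₀ : 0 ≤ K := by linarith
  have hPQ : 0 ≤ P * Q := mul_nonneg hP hQ
  have hE : 0 ≤ E := by positivity
  have hXY : X ≤ 16 * K * Y := hXle.trans_eq (by simp only [Y]; ring)
  have hcrossX : P * Q * (P + Q) * X ≤ 32 * K * E :=
    calc P * Q * (P + Q) * X ≤ P * Q * (P + Q) * (16 * K * Y) :=
          mul_le_mul_of_nonneg_left hXY (mul_nonneg hPQ (add_nonneg hP hQ))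
      _ = 16 * K * (P * Q * (P + Q) * Y) := by ring
      _ ≤ 16 * K * (2 * E) := mul_le_mul_of_nonneg_left hcross (by positivity)
      _ = 32 * K * E := by ring
  have hsqX : P * Q * X ^ 2 ≤ 256 * K ^ 2 * E :=
    calc P * Q * X ^ 2 ≤ P * Q * (16 * K * Y) ^ 2 :=
          mul_le_mul_of_nonneg_left (pow_le_pow_left₀ hX hXY 2) hPQ
      _ = 256 * K ^ 2 * (P * Q * Y ^ 2) := by ring
      _ ≤ 256 * K ^ 2 * E := mul_le_mul_of_nonneg_left hsq (by positivity)
  have hKE : K * E ≤ K ^ 2 * E := mul_le_mul_of_nonneg_right (by nlinarith) hE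
  have hE' : E ≤ K ^ 2 * E := le_mul_of_one_le_left hE (by nlinarith)
  have hPQE : (P * Q) ^ 2 ≤ E := by
    simp only [E]; linarith [sq_nonneg P, sq_nonneg Q, sq_nonneg G₁, sq_nonneg G₂, mul_pow P Q 2]
  have hexp : P * Q * ((2 * P + X) * (2 * Q + X))
      = 4 * (P * Q) ^ 2 + 2 * (P * Q * (P + Q) * X) + P * Q * X ^ 2 := by ring
  linarith

lemma energy_rate_le {γ A B X : ℝ} (hK : 1 ≤ K) (hh : 0 ≤ h) (hh2 : h ≤ 1 / 2)
    (hP : 0 ≤ P) (hQ : 0 ≤ Q) (hG₁ : 0 ≤ G₁) (hG₂ : 0 ≤ G₂) (hA₀ : 0 ≤ A)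
    (hB₀ : 0 ≤ B) (hX : 0 ≤ X) (hsmall : 2 * K * (h * (P ^ 2 + Q ^ 2)) ≤ 1)
    (hγ : γ ≤ K / 2 + K * (P * Q))
    (hA : A ≤ 3 * (P + Q + G₁ + G₂)) (hB : B ≤ 3 * (P + Q + G₁ + G₂))
    (hA' : A ≤ 2 * P + X) (hB' : B ≤ 2 * Q + X)
    (hinc : X ≤ h * (γ * (A + B) + K / 2 * (Q ^ 2 * A + P ^ 2 * B) + G₁ + G₂)) :
    γ * (A * B) + A * G₁ ≤ 360 * K ^ 3 * (P ^ 2 + Q ^ 2 + P ^ 2 * Q ^ 2 + (G₁ ^ 2 + G₂ ^ 2)) := by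
  have hnear := mul_two_add_mul_two_add_le hK hh hh2 hP hQ hG₁ hG₂ hX hsmall
    (increment_le_of_small hK hh hP hQ hG₁ hG₂ hA₀ hB₀ hX hsmall hγ hA hB hA' hB' hinc)
  set E := P ^ 2 + Q ^ 2 + P ^ 2 * Q ^ 2 + (G₁ ^ 2 + G₂ ^ 2)
  set σ := P + Q + G₁ + G₂
  have hK₀ : 0 ≤ K := by linarith
  have hE : 0 ≤ E := by positivity
  have hσ : σ ^ 2 ≤ 4 * E := by
    simp only [σ, E]
    linarith [sq_nonneg (P - Q), sq_nonneg (P - G₁), sq_nonneg (P - G₂), sq_nonneg (Q - G₁),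
      sq_nonneg (Q - G₂), sq_nonneg (G₁ - G₂), sq_nonneg (P * Q)]
  have hAB : A * B ≤ 9 * σ ^ 2 := by linarith [mul_le_mul hA hB hB₀ (by positivity)]
  have hAB' : P * Q * (A * B) ≤ P * Q * ((2 * P + X) * (2 * Q + X)) :=
    mul_le_mul_of_nonneg_left (mul_le_mul hA' hB' hB₀ (by positivity)) (mul_nonneg hP hQ)
  have hcoupling : γ * (A * B) ≤ K / 2 * (A * B) + K * (P * Q * (A * B)) := by
    linarith [mul_le_mul_of_nonneg_right hγ (mul_nonneg hA₀ hB₀)]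
  have hsource : A * G₁ ≤ 3 * σ ^ 2 := by
    linarith [mul_le_mul hA (by linarith : G₁ ≤ σ) hG₁ (by positivity)]
  have hK3 : K ≤ K ^ 3 := by nlinarith
  have hK3' : 1 ≤ K ^ 3 := by nlinarith
  linarith [mul_le_mul_of_nonneg_left (hAB.trans (by linarith : 9 * σ ^ 2 ≤ 36 * E))
      (by positivity : (0 : ℝ) ≤ K / 2),
    mul_le_mul_of_nonneg_left (hAB'.trans hnear) hK₀, mul_le_mul_of_nonneg_right hK3 hE,
    mul_le_mul_of_nonneg_right hK3' hE]

end Estimates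

lemma Gc_comm (a b : ℂ) : Gc a b = Gc b a := by
  unfold Gc; ring

lemma Gc_eq_ofReal_re (a b : ℂ) : Gc a b = ((Gc a b).re : ℂ) := by
  refine Complex.ext rfl ?_
  simp only [Gc, Complex.ofReal_im, Complex.add_im, Complex.mul_im, Complex.conj_re,
    Complex.conj_im]
  ring

lemma abs_Gc_re_le (a b : ℂ) : |(Gc a b).re| ≤ 2 * (‖a‖ * ‖b‖) :=
  calc |(Gc a b).re| ≤ ‖Gc a b‖ := Complex.abs_re_le_norm _
    _ ≤ ‖conj a * b‖ + ‖a * conj b‖ := norm_add_le _ _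
    _ = 2 * (‖a‖ * ‖b‖) := by simp only [norm_mul, Complex.norm_conj]; ring

/-- The coefficient of `i (b' + b)` in the first equation of the scheme, and of `i (a' + a)` in
the second. -/
def coupling (m β : ℝ) (a b : ℂ) : ℝ := m / 2 + β * (Gc a b).re / 2

lemma coupling_comm (m β : ℝ) (a b : ℂ) : coupling m β a b = coupling m β b a := by
  rw [coupling, coupling, Gc_comm]

lemma abs_coupling_le (m β : ℝ) (a b : ℂ) :
    |coupling m β a b| ≤ |m| / 2 + |β| * (‖a‖ * ‖b‖) := by
  have := mul_le_mul_of_nonneg_left (abs_Gc_re_le a b) (abs_nonneg β)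
  calc |coupling m β a b| ≤ |m / 2| + |β * (Gc a b).re / 2| := abs_add_le _ _
    _ = |m| / 2 + |β| * |(Gc a b).re| / 2 := by simp [abs_div, abs_mul]
    _ ≤ |m| / 2 + |β| * (‖a‖ * ‖b‖) := by linarith

lemma sq_norm_sub_sq_norm_eq_re (z w : ℂ) : ‖w‖ ^ 2 - ‖z‖ ^ 2 = (conj (w + z) * (w - z)).re := by
  simp only [Complex.sq_norm, Complex.normSq_apply, Complex.mul_re, Complex.add_re,
    Complex.add_im, Complex.sub_re, Complex.sub_im, Complex.conj_re, Complex.conj_im]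
  ring

lemma im_conj_mul_comm (z w : ℂ) : (conj w * z).im = -(conj z * w).im := by
  simp only [Complex.mul_im, Complex.conj_re, Complex.conj_im]
  ring

end QLB

namespace QLBStepInhom

open QLB

variable {h m α β : ℝ} {g₁ g₂ a b a' b' : ℂ}

lemma symm (H : QLBStepInhom h m α β g₁ g₂ a b a' b') :
    QLBStepInhom h m α β g₂ g₁ b a b' a' := by
  rw [QLBStepInhom, Gc_comm]
  exact ⟨H.2, H.1⟩

lemma sub_eq (H : QLBStepInhom h m α β g₁ g₂ a b a' b') (hh : h ≠ 0) :
    a' - a = h * (I * coupling m β a b * (b' + b) + I * (α / 2 * ‖b‖ ^ 2 : ℝ) * (a' + a) + g₁) := by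
  have := H.1
  rw [div_eq_iff (Complex.ofReal_ne_zero.mpr hh), Gc_eq_ofReal_re] at this
  rw [this, coupling]
  push_cast
  ring

lemma sq_norm_sub_sq_norm (H : QLBStepInhom h m α β g₁ g₂ a b a' b')
    (hh : h ≠ 0) :
    ‖a'‖ ^ 2 - ‖a‖ ^ 2
      = h * (-coupling m β a b * (conj (a' + a) * (b' + b)).im + (conj (a' + a) * g₁).re) := by
  rw [sq_norm_sub_sq_norm_eq_re, H.sub_eq hh]
  simp only [Complex.mul_re, Complex.mul_im, Complex.add_re, Complex.add_im, Complex.I_re,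
    Complex.I_im, Complex.ofReal_re, Complex.ofReal_im, Complex.conj_re, Complex.conj_im]
  ring

lemma sq_norm_add_sq_norm (H : QLBStepInhom h m α β g₁ g₂ a b a' b')
    (hh : h ≠ 0) :
    ‖a'‖ ^ 2 + ‖b'‖ ^ 2
      = ‖a‖ ^ 2 + ‖b‖ ^ 2 + h * ((conj (a' + a) * g₁).re + (conj (b' + b) * g₂).re) := by
  have ha := H.sq_norm_sub_sq_norm hh
  have hb := H.symm.sq_norm_sub_sq_norm hh
  rw [coupling_comm, im_conj_mul_comm] at hb
  linear_combination ha + hb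

lemma norm_sub_le (H : QLBStepInhom h m α β g₁ g₂ a b a' b') (hh : 0 < h) :
    ‖a' - a‖ ≤ h * (|coupling m β a b| * ‖b' + b‖ + |α| / 2 * ‖b‖ ^ 2 * ‖a' + a‖ + ‖g₁‖) := by
  rw [H.sub_eq hh.ne', norm_mul, Complex.norm_real, Real.norm_of_nonneg hh.le]
  refine mul_le_mul_of_nonneg_left ((norm_add₃_le).trans_eq ?_) hh.le
  simp

lemma norm_add_le_three_mul (H : QLBStepInhom h m α β g₁ g₂ a b a' b')
    (hh : 0 < h) (hh2 : h ≤ 1 / 2) :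
    ‖a' + a‖ ≤ 3 * (‖a‖ + ‖b‖ + ‖g₁‖ + ‖g₂‖) := by
  have hre (z w : ℂ) (c : ℝ) (hz : ‖z‖ ≤ c) : (conj z * w).re ≤ c * ‖w‖ :=
    (Complex.re_le_norm _).trans <| by
      rw [norm_mul, Complex.norm_conj]; exact mul_le_mul_of_nonneg_right hz (norm_nonneg w)
  have hmass : ‖a'‖ ^ 2 + ‖b'‖ ^ 2
      ≤ ‖a‖ ^ 2 + ‖b‖ ^ 2 + h * ((‖a'‖ + ‖a‖) * ‖g₁‖ + (‖b'‖ + ‖b‖) * ‖g₂‖) := by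
    rw [H.sq_norm_add_sq_norm hh.ne']
    gcongr
    exacts [hre _ _ _ (norm_add_le a' a), hre _ _ _ (norm_add_le b' b)]
  have := le_two_mul_of_sq_add_sq_le hh2 (norm_nonneg a) (norm_nonneg b) (norm_nonneg g₁)
    (norm_nonneg g₂) (norm_nonneg a') (norm_nonneg b') hmass
  linarith [norm_add_le a' a, norm_nonneg b, norm_nonneg g₁, norm_nonneg g₂]

lemma norm_sub_add_norm_sub_le (H : QLBStepInhom h m α β g₁ g₂ a b a' b')
    (hh : 0 < h) :
    ‖a' - a‖ + ‖b' - b‖ ≤ h * (|coupling m β a b| * (‖a' + a‖ + ‖b' + b‖)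
      + |α| / 2 * (‖b‖ ^ 2 * ‖a' + a‖ + ‖a‖ ^ 2 * ‖b' + b‖) + ‖g₁‖ + ‖g₂‖) := by
  have ha := H.norm_sub_le hh
  have hb := H.symm.norm_sub_le hh
  rw [← coupling_comm] at hb
  linear_combination ha + hb

lemma abs_sq_norm_sub_le (H : QLBStepInhom h m α β g₁ g₂ a b a' b')
    (hh : 0 < h) :
    |‖a'‖ ^ 2 - ‖a‖ ^ 2|
      ≤ h * (|coupling m β a b| * (‖a' + a‖ * ‖b' + b‖) + ‖a' + a‖ * ‖g₁‖) := by
  have him : |(conj (a' + a) * (b' + b)).im| ≤ ‖a' + a‖ * ‖b' + b‖ :=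
    (Complex.abs_im_le_norm _).trans_eq (by rw [norm_mul, Complex.norm_conj])
  have hre : |(conj (a' + a) * g₁).re| ≤ ‖a' + a‖ * ‖g₁‖ :=
    (Complex.abs_re_le_norm _).trans_eq (by rw [norm_mul, Complex.norm_conj])
  rw [H.sq_norm_sub_sq_norm hh.ne', abs_mul, abs_of_pos hh]
  gcongr
  calc _ ≤ |-coupling m β a b * (conj (a' + a) * (b' + b)).im| + |(conj (a' + a) * g₁).re| :=
        abs_add_le _ _
    _ ≤ _ := by
        rw [abs_mul, abs_neg]
        gcongr

lemma abs_sq_norm_sub_div_le (H : QLBStepInhom h m α β g₁ g₂ a b a' b')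
    (hh : 0 < h) (hh2 : h < 1 / 2)
    (hsmall : (‖a‖ ^ 2 + ‖b‖ ^ 2) * h ≤ 1 / (2 * (|m| + |α| + |β| + 1))) :
    |‖a'‖ ^ 2 - ‖a‖ ^ 2| / h ≤ 360 * (|m| + |α| + |β| + 1) ^ 3 *
      (‖a‖ ^ 2 + ‖b‖ ^ 2 + ‖a‖ ^ 2 * ‖b‖ ^ 2 + (‖g₁‖ ^ 2 + ‖g₂‖ ^ 2)) := by
  set K := |m| + |α| + |β| + 1 with hK_def
  have hK : 1 ≤ K := by linarith [abs_nonneg m, abs_nonneg α, abs_nonneg β]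
  have hsmall' : 2 * K * (h * (‖a‖ ^ 2 + ‖b‖ ^ 2)) ≤ 1 := by
    rw [le_div_iff₀ (by positivity)] at hsmall; linarith
  have hγ : |coupling m β a b| ≤ K / 2 + K * (‖a‖ * ‖b‖) := by
    have := mul_le_mul_of_nonneg_right (by linarith [abs_nonneg m, abs_nonneg α] : |β| ≤ K)
      (mul_nonneg (norm_nonneg a) (norm_nonneg b))
    linarith [abs_coupling_le m β a b, abs_nonneg α, abs_nonneg β]
  have hinc := H.norm_sub_add_norm_sub_le hh
  grw [show |α| / 2 ≤ K / 2 by linarith [abs_nonneg m, abs_nonneg β]] at hinc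
  rw [div_le_iff₀ hh, mul_comm _ h]
  refine (H.abs_sq_norm_sub_le hh).trans (mul_le_mul_of_nonneg_left ?_ hh.le)
  exact energy_rate_le hK hh.le hh2.le (norm_nonneg a) (norm_nonneg b) (norm_nonneg g₁)
    (norm_nonneg g₂) (norm_nonneg _) (norm_nonneg _) (add_nonneg (norm_nonneg _) (norm_nonneg _))
    hsmall' hγ (H.norm_add_le_three_mul hh hh2.le)
    (by linarith [H.symm.norm_add_le_three_mul hh hh2.le])
    (by linarith [norm_add_le_two_mul_norm_add_norm_sub a a', norm_nonneg (b' - b)])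
    (by linarith [norm_add_le_two_mul_norm_add_norm_sub b b', norm_nonneg (a' - a)]) hinc

end QLBStepInhom

theorem stmt8_general (m α β : ℝ) :
    ∃ δ₁ > (0 : ℝ), ∃ C₂ > (0 : ℝ), ∀ h : ℝ, 0 < h → h < 1 / 2 →
      ∀ g1 g2 u v : ℕ → ℤ → ℂ, IsQLBInhom h m α β g1 g2 u v →
        ∀ (k : ℕ) (n : ℤ),
          (‖u k n‖ ^ 2 + ‖v k n‖ ^ 2) * h ≤ δ₁ →
          |‖u (k + 1) (n + 1)‖ ^ 2 - ‖u k n‖ ^ 2| / h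
            ≤ C₂ * ((‖u k n‖ ^ 2 + ‖v k n‖ ^ 2)
              + ‖u k n‖ ^ 2 * ‖v k n‖ ^ 2
              + (‖g1 k n‖ ^ 2 + ‖g2 k n‖ ^ 2)) ∧
          |‖v (k + 1) (n - 1)‖ ^ 2 - ‖v k n‖ ^ 2| / h
            ≤ C₂ * ((‖u k n‖ ^ 2 + ‖v k n‖ ^ 2)
              + ‖u k n‖ ^ 2 * ‖v k n‖ ^ 2
              + (‖g1 k n‖ ^ 2 + ‖g2 k n‖ ^ 2)) := by
  refine ⟨1 / (2 * (|m| + |α| + |β| + 1)), by positivity,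
    360 * (|m| + |α| + |β| + 1) ^ 3, by positivity, ?_⟩
  intro h hh hh2 g1 g2 u v hsol k n hsmall
  refine ⟨(hsol k n).abs_sq_norm_sub_div_le hh hh2 hsmall, ?_⟩
  have := (hsol k n).symm.abs_sq_norm_sub_div_le hh hh2 (by linarith)
  convert this using 2
  ring

/-- Local evolution estimates for the inhomogeneous QLB scheme: there are constants
`δ₁, C₂ > 0` depending only on `m, α, β` such that the stated bounds hold. -/
theorem stmt8 (m α β : ℝ) (hm : 0 ≤ m) :
    ∃ δ₁ > (0 : ℝ), ∃ C₂ > (0 : ℝ), ∀ h : ℝ, 0 < h → h < 1 / 2 →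
      ∀ g1 g2 u v : ℕ → ℤ → ℂ, IsQLBInhom h m α β g1 g2 u v →
        ∀ (k : ℕ) (n : ℤ),
          (‖u k n‖ ^ 2 + ‖v k n‖ ^ 2) * h ≤ δ₁ →
          |‖u (k + 1) (n + 1)‖ ^ 2 - ‖u k n‖ ^ 2| / h
            ≤ C₂ * ((‖u k n‖ ^ 2 + ‖v k n‖ ^ 2)
              + ‖u k n‖ ^ 2 * ‖v k n‖ ^ 2
              + (‖g1 k n‖ ^ 2 + ‖g2 k n‖ ^ 2)) ∧
          |‖v (k + 1) (n - 1)‖ ^ 2 - ‖v k n‖ ^ 2| / h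
            ≤ C₂ * ((‖u k n‖ ^ 2 + ‖v k n‖ ^ 2)
              + ‖u k n‖ ^ 2 * ‖v k n‖ ^ 2
              + (‖g1 k n‖ ^ 2 + ‖g2 k n‖ ^ 2)) :=
  stmt8_general m α β

end
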